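/- Let π : (X,T) → (Y,S) be an almost one-to-one factor map between topological dynamical systems (there is a dense Gδ set X₀ ⊆ X with π⁻¹(π(x)) = {x} for all x ∈ X₀). If (Y,S) is transitive, then (X,T) is transitive; if (Y,S) is minimal, then (X,T) is minimal and π is a proximal extension. -/

import Mathlib

open Set Filter TopologicalSpace

/-- The `n`-th iterate (n ∈ ℤ) of a homeomorphism. -/
def hIter {X : Type*} [TopologicalSpace X] (T : X ≃ₜ X) (n : ℤ) : X → X :=
  fun x => (T.toEquiv ^ n) x

/-- The full orbit {Tⁿ x : n ∈ ℤ} of a point. -/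
def orb {X : Type*} [TopologicalSpace X] (T : X ≃ₜ X) (x : X) : Set X :=
  Set.range fun n : ℤ => hIter T n x

/-- The orbit closure of a point. -/
def orbCl {X : Type*} [TopologicalSpace X] (T : X ≃ₜ X) (x : X) : Set X :=
  closure (orb T x)

/-- A system is minimal if it has no proper nonempty closed invariant subset. -/
def IsMinimalSys {X : Type*} [TopologicalSpace X] (T : X → X) : Prop :=
  ∀ A : Set X, IsClosed A → A.Nonempty → T '' A = A → A = Set.univ

/-- `J` is a joining of the subsystems `(K,T)` and `(L,S)`: a closed `T × S`-invariant
subset of `K ×ˢ L` projecting onto `K` and onto `L`. -/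
def IsJoiningOn {X Y : Type*} [TopologicalSpace X] [TopologicalSpace Y]
    (T : X → X) (S : Y → Y) (K : Set X) (L : Set Y) (J : Set (X × Y)) : Prop :=
  IsClosed J ∧ J ⊆ K ×ˢ L ∧ Prod.map T S '' J = J ∧
    Prod.fst '' J = K ∧ Prod.snd '' J = L

/-- The subsystems `(K,T)` and `(L,S)` are disjoint: their only joining is `K ×ˢ L`. -/
def DisjointOn {X Y : Type*} [TopologicalSpace X] [TopologicalSpace Y]
    (T : X → X) (S : Y → Y) (K : Set X) (L : Set Y) : Prop :=
  ∀ J : Set (X × Y), IsJoiningOn T S K L J → J = K ×ˢ L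

/-! Everything rests on the points `x₀` with `π⁻¹(π x₀) = {x₀}`: as `π` is a closed map, every
neighbourhood of such a point contains the full preimage of a neighbourhood of `π x₀`.
This transfers topological transitivity from `Y` to `X`, and Baire's theorem turns it into a
dense orbit. A closed invariant `A ⊆ X` maps onto a minimal `Y`, hence contains all these
points and is dense. For proximality, the orbit closure of `(x₁, x₂)` under `T × T` lies in
`{p | π p.1 = π p.2}` and projects onto the minimal `X`, so above `x₀` it contains `(x₀, x₀)`. -/

open Function Topology

section TopologicalDynamics

variable {X Y : Type*} [TopologicalSpace X] [TopologicalSpace Y]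

lemma hIter_eq_coe_zpow (T : X ≃ₜ X) (n : ℤ) : hIter T n = ⇑(T ^ n) := by
  let toPerm : (X ≃ₜ X) →* Equiv.Perm X :=
    { toFun := Homeomorph.toEquiv, map_one' := rfl, map_mul' := fun _ _ => rfl }
  exact congrArg DFunLike.coe (map_zpow toPerm T n).symm

lemma continuous_hIter (T : X ≃ₜ X) (n : ℤ) : Continuous (hIter T n) := by
  rw [hIter_eq_coe_zpow]
  exact (T ^ n).continuous

lemma hIter_add (T : X ≃ₜ X) (m n : ℤ) (x : X) :
    hIter T (m + n) x = hIter T m (hIter T n x) := by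
  simp only [hIter_eq_coe_zpow, zpow_add, Homeomorph.mul_apply]

lemma hIter_add_one (T : X ≃ₜ X) (n : ℤ) (x : X) : hIter T (n + 1) x = T (hIter T n x) := by
  rw [add_comm, hIter_add, hIter_eq_coe_zpow, zpow_one]

lemma Function.Semiconj.hIter {π : X → Y} {T : X ≃ₜ X} {S : Y ≃ₜ Y} (h : Semiconj π T S)
    (n : ℤ) : Semiconj π (hIter T n) (hIter S n) := by
  simp only [hIter_eq_coe_zpow]
  induction n using Int.induction_on with
  | zero => exact Semiconj.id_right
  | succ n ih =>
    rw [zpow_add_one, zpow_add_one]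
    exact ih.comp_right h
  | pred n ih =>
    rw [zpow_sub_one, zpow_sub_one]
    exact ih.comp_right (h.inverses_right T.apply_symm_apply S.symm_apply_apply)

lemma hIter_prodCongr (T : X ≃ₜ X) (S : Y ≃ₜ Y) (n : ℤ) (p : X × Y) :
    hIter (T.prodCongr S) n p = (hIter T n p.1, hIter S n p.2) :=
  Prod.ext ((show Semiconj Prod.fst (T.prodCongr S) T from fun _ => rfl).hIter n p)
    ((show Semiconj Prod.snd (T.prodCongr S) S from fun _ => rfl).hIter n p)

lemma image_orbCl (T : X ≃ₜ X) (x : X) : T '' orbCl T x = orbCl T x := by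
  have hshift : Surjective fun n : ℤ => n + 1 := fun n => ⟨n - 1, sub_add_cancel n 1⟩
  rw [orbCl, T.image_closure, orb, ← range_comp']
  simp only [← hIter_add_one]
  exact congrArg closure (hshift.range_comp fun n => hIter T n x)

lemma self_mem_orbCl (T : X ≃ₜ X) (x : X) : x ∈ orbCl T x :=
  subset_closure ⟨0, by simp [hIter_eq_coe_zpow]⟩

-- For compact metric `X` and continuous `π` this set is automatically a Gδ.
def IsAlmostOneToOne (π : X → Y) : Prop :=
  Dense {x | π ⁻¹' {π x} = {x}}

lemma IsClosedMap.exists_isOpen_preimage_subset {π : X → Y} (hπ : IsClosedMap π) {y : Y}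
    {U : Set X} (hU : IsOpen U) (hyU : π ⁻¹' {y} ⊆ U) :
    ∃ V : Set Y, IsOpen V ∧ y ∈ V ∧ π ⁻¹' V ⊆ U := by
  have hfiber : ∀ᶠ y' in 𝓝 y, ∀ x ∈ π ⁻¹' {y'}, x ∈ U :=
    hπ.eventually_nhds_fiber y fun x hx => hU.mem_nhds (hyU hx)
  obtain ⟨V, hVU, hV, hyV⟩ := eventually_nhds_iff.1 hfiber
  exact ⟨V, hV, hyV, fun x hx => hVU _ hx x rfl⟩

lemma IsMinimalSys.of_isAlmostOneToOne {T : X → X} {S : Y → Y} {π : X → Y}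
    (hS : IsMinimalSys S) (hπ : Semiconj π T S) (hclosed : IsClosedMap π)
    (h1 : IsAlmostOneToOne π) : IsMinimalSys T := by
  intro A hA hAne hTA
  have hπA : π '' A = univ :=
    hS _ (hclosed A hA) (hAne.image π) (by rw [← hπ.set_image A, hTA])
  have hsub : {x | π ⁻¹' {π x} = {x}} ⊆ A := by
    intro x hx
    obtain ⟨a, ha, hax⟩ := hπA.symm ▸ mem_univ (π x)
    have hfiber : a ∈ π ⁻¹' {π x} := hax
    rw [show π ⁻¹' {π x} = {x} from hx, mem_singleton_iff] at hfiber
    exact hfiber ▸ ha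
  rw [← hA.closure_eq, (h1.mono hsub).closure_eq]

def IsTopologicallyTransitive (T : X ≃ₜ X) : Prop :=
  ∀ U W : Set X, IsOpen U → U.Nonempty → IsOpen W → W.Nonempty →
    ∃ n : ℤ, (W ∩ hIter T n ⁻¹' U).Nonempty

lemma isTopologicallyTransitive_of_dense_orb {T : X ≃ₜ X} {x : X} (h : Dense (orb T x)) :
    IsTopologicallyTransitive T := by
  intro U W hU hUne hW hWne
  obtain ⟨_, hu, m, rfl⟩ := h.inter_open_nonempty U hU hUne
  obtain ⟨_, hw, k, rfl⟩ := h.inter_open_nonempty W hW hWne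
  refine ⟨m - k, hIter T k x, hw, ?_⟩
  rwa [mem_preimage, ← hIter_add, sub_add_cancel]

lemma IsTopologicallyTransitive.of_isAlmostOneToOne {T : X ≃ₜ X} {S : Y ≃ₜ Y} {π : X → Y}
    (hS : IsTopologicallyTransitive S) (hπ : Semiconj π T S) (hsurj : Surjective π)
    (hclosed : IsClosedMap π) (h1 : IsAlmostOneToOne π) : IsTopologicallyTransitive T := by
  intro U W hU hUne hW hWne
  obtain ⟨u, huU, hu⟩ := h1.inter_open_nonempty U hU hUne
  obtain ⟨w, hwW, hw⟩ := h1.inter_open_nonempty W hW hWne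
  obtain ⟨VU, hVU, huVU, hVUU⟩ :=
    hclosed.exists_isOpen_preimage_subset hU (hu.symm ▸ singleton_subset_iff.2 huU)
  obtain ⟨VW, hVW, hwVW, hVWW⟩ :=
    hclosed.exists_isOpen_preimage_subset hW (hw.symm ▸ singleton_subset_iff.2 hwW)
  obtain ⟨n, y, hyVW, hyVU⟩ := hS VU VW hVU ⟨_, huVU⟩ hVW ⟨_, hwVW⟩
  obtain ⟨x, rfl⟩ := hsurj y
  refine ⟨n, x, hVWW hyVW, hVUU ?_⟩
  rwa [mem_preimage, (hπ.hIter n).eq]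

lemma IsTopologicallyTransitive.exists_dense_orb [SecondCountableTopology X] [BaireSpace X]
    [Nonempty X] {T : X ≃ₜ X} (hT : IsTopologicallyTransitive T) : ∃ x, Dense (orb T x) := by
  let B := {U ∈ countableBasis X | U.Nonempty}
  have hB : IsTopologicalBasis (countableBasis X) := isBasis_countableBasis X
  have hvisit : Dense (⋂ U ∈ B, ⋃ n : ℤ, hIter T n ⁻¹' U) := by
    refine dense_biInter_of_isOpen (fun U hU => ?_)
      ((countable_countableBasis X).mono (sep_subset _ _)) (fun U hU => ?_)
    · exact isOpen_iUnion fun n => (hB.isOpen hU.1).preimage (continuous_hIter T n)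
    · refine dense_iff_inter_open.2 fun W hW hWne => ?_
      obtain ⟨n, x, hxW, hxU⟩ := hT U W (hB.isOpen hU.1) hU.2 hW hWne
      exact ⟨x, hxW, mem_iUnion.2 ⟨n, hxU⟩⟩
  obtain ⟨x, hx⟩ := hvisit.nonempty
  refine ⟨x, hB.dense_iff.2 fun U hU hUne => ?_⟩
  obtain ⟨n, hn⟩ := mem_iUnion.1 (mem_iInter₂.1 hx U ⟨hU, hUne⟩)
  exact ⟨hIter T n x, hn, n, rfl⟩

lemma diag_mem_orbCl_prodCongr [CompactSpace X] [T2Space X] [T2Space Y] {T : X ≃ₜ X}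
    {S : Y ≃ₜ Y} {π : X → Y} (hT : IsMinimalSys T) (hπ : Semiconj π T S) (hπc : Continuous π)
    {x₀ : X} (hx₀ : π ⁻¹' {π x₀} = {x₀}) {x₁ x₂ : X} (h : π x₁ = π x₂) :
    (x₀, x₀) ∈ orbCl (T.prodCongr T) (x₁, x₂) := by
  set K := orbCl (T.prodCongr T) (x₁, x₂)
  have hfst : Semiconj Prod.fst (T.prodCongr T) T := fun _ => rfl
  have hK : IsClosed K := isClosed_closure
  have hKfiber : K ⊆ {p | π p.1 = π p.2} := by
    refine closure_minimal ?_ (isClosed_eq (hπc.comp continuous_fst) (hπc.comp continuous_snd))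
    rintro _ ⟨n, rfl⟩
    simp only [mem_ofPred_eq, hIter_prodCongr, (hπ.hIter n).eq, h]
  have hfstK : Prod.fst '' K = univ :=
    hT _ (hK.isCompact.image continuous_fst).isClosed
      ⟨x₁, _, self_mem_orbCl _ _, rfl⟩ (by rw [← hfst.set_image K, image_orbCl])
  obtain ⟨p, hpK, hp⟩ := hfstK.symm ▸ mem_univ x₀
  have hp₂ : p.2 ∈ π ⁻¹' {π x₀} := hp ▸ (hKfiber hpK).symm
  rw [hx₀, mem_singleton_iff] at hp₂
  rwa [show p = (x₀, x₀) from Prod.ext hp hp₂] at hpK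

end TopologicalDynamics

lemma exists_dist_hIter_lt_of_mem_orbCl {X : Type*} [PseudoMetricSpace X] {T : X ≃ₜ X}
    {x₀ x₁ x₂ : X}
    (h : (x₀, x₀) ∈ orbCl (T.prodCongr T) (x₁, x₂)) {ε : ℝ} (hε : 0 < ε) :
    ∃ n : ℤ, dist (hIter T n x₁) (hIter T n x₂) < ε := by
  have hopen : IsOpen {p : X × X | dist p.1 p.2 < ε} :=
    isOpen_lt (continuous_fst.dist continuous_snd) continuous_const
  obtain ⟨_, hp, n, rfl⟩ := mem_closure_iff.1 h _ hopen (by simpa using hε)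
  exact ⟨n, by simpa only [mem_ofPred_eq, hIter_prodCongr] using hp⟩

theorem stmt_12_general {X Y : Type*} [MetricSpace X] [CompactSpace X]
    [MetricSpace Y] (T : X ≃ₜ X) (S : Y ≃ₜ Y)
    (π : X → Y) (hπc : Continuous π) (hπs : Function.Surjective π)
    (hπ : ∀ x, π (T x) = S (π x))
    (halmost : ∃ X₀ : Set X, IsGδ X₀ ∧ Dense X₀ ∧ ∀ x ∈ X₀, π ⁻¹' {π x} = {x}) :
    ((∃ y : Y, Dense (orb S y)) → ∃ x : X, Dense (orb T x)) ∧
    (IsMinimalSys (⇑S) →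
      IsMinimalSys (⇑T) ∧
      ∀ x₁ x₂ : X, π x₁ = π x₂ →
        ∀ ε > (0 : ℝ), ∃ n : ℤ, dist (hIter T n x₁) (hIter T n x₂) < ε) := by
  obtain ⟨X₀, -, hX₀, hfiber⟩ := halmost
  have h1 : IsAlmostOneToOne π := hX₀.mono hfiber
  have hclosed : IsClosedMap π := hπc.isClosedMap
  refine ⟨fun ⟨y, hy⟩ => ?_, fun hS => ?_⟩
  · have : Nonempty X := ⟨(hπs y).choose⟩
    exact ((isTopologicallyTransitive_of_dense_orb hy).of_isAlmostOneToOne hπ hπs hclosed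
      h1).exists_dense_orb
  · have hT : IsMinimalSys T := hS.of_isAlmostOneToOne hπ hclosed h1
    refine ⟨hT, fun x₁ x₂ h ε hε => ?_⟩
    have : Nonempty X := ⟨x₁⟩
    obtain ⟨x₀, hx₀⟩ := h1.nonempty
    exact exists_dist_hIter_lt_of_mem_orbCl (diag_mem_orbCl_prodCongr hT hπ hπc hx₀ h) hε

/-- Let π : (X,T) → (Y,S) be an almost one-to-one factor map. If (Y,S) is transitive
then so is (X,T); if (Y,S) is minimal then (X,T) is minimal and π is proximal. -/
theorem stmt_12 {X Y : Type*} [MetricSpace X] [CompactSpace X]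
    [MetricSpace Y] [CompactSpace Y] (T : X ≃ₜ X) (S : Y ≃ₜ Y)
    (π : X → Y) (hπc : Continuous π) (hπs : Function.Surjective π)
    (hπ : ∀ x, π (T x) = S (π x))
    (halmost : ∃ X₀ : Set X, IsGδ X₀ ∧ Dense X₀ ∧ ∀ x ∈ X₀, π ⁻¹' {π x} = {x}) :
    ((∃ y : Y, Dense (orb S y)) → ∃ x : X, Dense (orb T x)) ∧
    (IsMinimalSys (⇑S) →
      IsMinimalSys (⇑T) ∧
      ∀ x₁ x₂ : X, π x₁ = π x₂ →
        ∀ ε > (0 : ℝ), ∃ n : ℤ, dist (hIter T n x₁) (hIter T n x₂) < ε) :=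
  stmt_12_general T S π hπc hπs hπ halmost
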